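/- arXiv:2303.12182 — 4 statements merged into one kernel-verified Lean document; each statement's English description precedes it below -/
import Mathlib

section
/- Let α ≥ 0 and β, γ > 0, let F : ℝ × ℝ → ℝ be differentiable at (θ(t), d(t)), and let θ, d : ℝ → ℝ satisfy the closed-loop dynamics at time t: θ has derivative γ·F(θ(t),d(t)) at t and d has derivative β·exp(−α·F(θ(t),d(t))²)·sin(θ(t)) at t. Write Fθ and Fd for the partial derivatives of F at (θ(t),d(t)) and write F₀ = F(θ(t),d(t)). If Fθ < 0 and |Fθ|·γ·|F₀| > |Fd|·β·exp(−α·F₀²)·|sin(θ(t))|, then the function V : s ↦ (1/2)·F(θ(s),d(s))² has strictly negative derivative at t. -/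
/-! Along the closed loop, `V' = F₀ · (γ F₀ Fθ + β e^{-αF₀²} sin θ · Fd)` by the chain rule.
Since `Fθ < 0` the first term equals `-|Fθ| γ F₀²`, and the hypothesis says exactly that it
dominates the second term, which is at most `|F₀| |Fd| β e^{-αF₀²} |sin θ|` in absolute value. -/

theorem ContinuousLinearMap.apply_prod_eq {E : Type*} [NormedAddCommGroup E] [NormedSpace ℝ E]
    (L : ℝ × ℝ →L[ℝ] E) (a b : ℝ) : L (a, b) = a • L (1, 0) + b • L (0, 1) := by
  rw [← map_smul, ← map_smul, ← map_add]
  simp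

theorem HasFDerivAt.hasDerivAt_comp_prodMk {E : Type*} [NormedAddCommGroup E] [NormedSpace ℝ E]
    {F : ℝ × ℝ → E} {L : ℝ × ℝ →L[ℝ] E} {x y : ℝ → ℝ} {x' y' t : ℝ}
    (hF : HasFDerivAt F L (x t, y t)) (hx : HasDerivAt x x' t) (hy : HasDerivAt y y' t) :
    HasDerivAt (fun s => F (x s, y s)) (x' • L (1, 0) + y' • L (0, 1)) t := by
  rw [← L.apply_prod_eq]
  exact hF.comp_hasDerivAt t (hx.prodMk hy)

theorem HasDerivAt.half_sq {g : ℝ → ℝ} {g' t : ℝ} (hg : HasDerivAt g g' t) :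
    HasDerivAt (fun s => (1 / 2) * g s ^ 2) (g t * g') t :=
  ((hg.fun_pow 2).const_mul (1 / 2 : ℝ)).congr_deriv (by push_cast; ring)

theorem mul_add_neg_of_abs_mul_lt {a p q u w : ℝ} (hp : p < 0)
    (h : |q| * |w| < |p| * u * |a|) : a * (u * a * p + w * q) < 0 := by
  have ha : 0 < |a| := by
    by_contra! ha
    rw [abs_nonpos_iff.mp ha, abs_zero, mul_zero] at h
    exact (h.trans_le' (by positivity)).false
  have hcross : a * (w * q) ≤ |a| * (|q| * |w|) := by
    calc a * (w * q) ≤ |a * (w * q)| := le_abs_self _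
      _ = |a| * (|q| * |w|) := by rw [abs_mul, abs_mul, mul_comm |w|]
  have hsq : a * (u * a * p) = -(|a| * (|p| * u * |a|)) := by
    rw [abs_of_neg hp]
    linear_combination (-(p * u)) * abs_mul_abs_self a
  nlinarith [mul_lt_mul_of_pos_left h ha]

theorem stmt2_general (α β γ : ℝ) (hβ : 0 < β)
    (F : ℝ × ℝ → ℝ) (θ d : ℝ → ℝ) (t : ℝ)
    (L : ℝ × ℝ →L[ℝ] ℝ) (hF : HasFDerivAt F L (θ t, d t))
    (hθ : HasDerivAt θ (γ * F (θ t, d t)) t)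
    (hd : HasDerivAt d (β * Real.exp (-α * F (θ t, d t) ^ 2) * Real.sin (θ t)) t)
    (hFθneg : L (1, 0) < 0)
    (hcond : |L (1, 0)| * γ * |F (θ t, d t)| >
      |L (0, 1)| * β * Real.exp (-α * F (θ t, d t) ^ 2) * |Real.sin (θ t)|) :
    deriv (fun s => (1 / 2) * F (θ s, d s) ^ 2) t < 0 := by
  rw [(hF.hasDerivAt_comp_prodMk hθ hd).half_sq.deriv]
  apply mul_add_neg_of_abs_mul_lt hFθneg
  rwa [abs_mul, abs_mul, abs_of_pos hβ, abs_of_pos (Real.exp_pos _), ← mul_assoc, ← mul_assoc]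

/-- Sufficient condition for decrease of the Lyapunov-like
function.  With `α ≥ 0`, `β, γ > 0`, `F` differentiable at `(θ t, d t)` with
total derivative `L` (partial derivatives `Fθ = L (1,0)`, `Fd = L (0,1)`),
`F₀ = F (θ t, d t)`, and `θ, d` satisfying the closed-loop dynamics at time
`t`, if `Fθ < 0` and `|Fθ|·γ·|F₀| > |Fd|·β·exp(−α F₀²)·|sin (θ t)|`, then
`V : s ↦ (1/2)·F(θ s, d s)²` has strictly negative derivative at `t`. -/
theorem stmt2 (α β γ : ℝ) (hα : 0 ≤ α) (hβ : 0 < β) (hγ : 0 < γ)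
    (F : ℝ × ℝ → ℝ) (θ d : ℝ → ℝ) (t : ℝ)
    (L : ℝ × ℝ →L[ℝ] ℝ) (hF : HasFDerivAt F L (θ t, d t))
    (hθ : HasDerivAt θ (γ * F (θ t, d t)) t)
    (hd : HasDerivAt d (β * Real.exp (-α * F (θ t, d t) ^ 2) * Real.sin (θ t)) t)
    (hFθneg : L (1, 0) < 0)
    (hcond : |L (1, 0)| * γ * |F (θ t, d t)| >
      |L (0, 1)| * β * Real.exp (-α * F (θ t, d t) ^ 2) * |Real.sin (θ t)|) :
    deriv (fun s => (1 / 2) * F (θ s, d s) ^ 2) t < 0 :=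
  stmt2_general α β γ hβ F θ d t L hF hθ hd hFθneg hcond
end

section
/- Let γ, F̲, β' > 0 and T > 0, and let θ, d : [0,T] → ℝ be differentiable functions such that for all t ∈ [0,T]: θ(t) ∈ [0, π], θ'(t) ≤ −γ·F̲, d'(t) ≤ β'·sin(θ(t)), and θ(T) = 0. Then d(T) ≤ d(0) + (β'/(γ·F̲))·(1 − cos(θ(0))). -/
/-!
Along the trajectory `c · cos θ` increases at rate `-c · sin θ · θ' ≥ c · γF̲ · sin θ`, which for
`c = β' / (γF̲)` dominates the growth rate `d' ≤ β' · sin θ` of `d`. Comparing `d` with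
`d 0 + c · (cos θ - cos (θ 0))` and evaluating at `T`, where `cos (θ T) = 1`, gives the bound.
-/

open Set Real

theorem le_add_mul_cos_sub_cos_of_hasDerivAt {a b c : ℝ} {θ θ' d d' : ℝ → ℝ}
    (hθ : ∀ t ∈ Icc a b, HasDerivAt θ (θ' t) t) (hd : ∀ t ∈ Icc a b, HasDerivAt d (d' t) t)
    (hbound : ∀ t ∈ Ico a b, d' t ≤ -c * sin (θ t) * θ' t) :
    ∀ t ∈ Icc a b, d t ≤ d a + c * (cos (θ t) - cos (θ a)) := by
  have hB : ∀ t ∈ Icc a b, HasDerivAt (fun s ↦ d a + c * (cos (θ s) - cos (θ a)))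
      (-c * sin (θ t) * θ' t) t := fun t ht ↦
    ((((hθ t ht).cos.sub_const (cos (θ a))).const_mul c).const_add (d a)).congr_deriv (by ring)
  exact image_le_of_deriv_right_le_deriv_boundary
    (fun t ht ↦ (hd t ht).continuousAt.continuousWithinAt)
    (fun t ht ↦ (hd t (Ico_subset_Icc_self ht)).hasDerivWithinAt) (by simp)
    (fun t ht ↦ (hB t ht).continuousAt.continuousWithinAt)
    (fun t ht ↦ (hB t (Ico_subset_Icc_self ht)).hasDerivWithinAt) hbound

theorem mul_sin_le_neg_div_mul_sin_mul {β k φ φ' : ℝ} (hβ : 0 ≤ β) (hk : 0 < k)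
    (hφ : φ ∈ Icc 0 π) (hφ' : φ' ≤ -k) : β * sin φ ≤ -(β / k) * sin φ * φ' := by
  have hsin : 0 ≤ β / k * sin φ := mul_nonneg (div_nonneg hβ hk.le) (sin_nonneg_of_mem_Icc hφ)
  calc β * sin φ = β / k * sin φ * k := by field_simp
    _ ≤ β / k * sin φ * -φ' := mul_le_mul_of_nonneg_left (by linarith) hsin
    _ = -(β / k) * sin φ * φ' := by ring

/-- Bound on the rise of the offset distance `d`.  Let
`γ, F̲, β' > 0` and `T > 0`, and let `θ, d` be differentiable on `[0,T]` with
`θ t ∈ [0, π]`, `θ' t ≤ −γ·F̲` and `d' t ≤ β'·sin (θ t)` on `[0,T]`, and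
`θ T = 0`.  Then `d T ≤ d 0 + (β'/(γ·F̲))·(1 − cos (θ 0))`. -/
theorem stmt6 (γ Flow β' T : ℝ) (hγ : 0 < γ) (hFlow : 0 < Flow)
    (hβ' : 0 < β') (hT : 0 < T)
    (θ d θ' d' : ℝ → ℝ)
    (hθdiff : ∀ t ∈ Set.Icc (0 : ℝ) T, HasDerivAt θ (θ' t) t)
    (hddiff : ∀ t ∈ Set.Icc (0 : ℝ) T, HasDerivAt d (d' t) t)
    (hθrange : ∀ t ∈ Set.Icc (0 : ℝ) T, θ t ∈ Set.Icc (0 : ℝ) Real.pi)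
    (hθ' : ∀ t ∈ Set.Icc (0 : ℝ) T, θ' t ≤ -(γ * Flow))
    (hd' : ∀ t ∈ Set.Icc (0 : ℝ) T, d' t ≤ β' * Real.sin (θ t))
    (hθT : θ T = 0) :
    d T ≤ d 0 + (β' / (γ * Flow)) * (1 - Real.cos (θ 0)) := by
  have hrate : ∀ t ∈ Ico 0 T, d' t ≤ -(β' / (γ * Flow)) * sin (θ t) * θ' t := fun t ht ↦
    (hd' t (Ico_subset_Icc_self ht)).trans <| mul_sin_le_neg_div_mul_sin_mul hβ'.le
      (mul_pos hγ hFlow) (hθrange t (Ico_subset_Icc_self ht)) (hθ' t (Ico_subset_Icc_self ht))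
  have hcomp := le_add_mul_cos_sub_cos_of_hasDerivAt hθdiff hddiff hrate T ⟨hT.le, le_rfl⟩
  rwa [hθT, cos_zero] at hcomp
end

section
/- Let γ, F̲, β' > 0, let 0 < θ̄ and 0 < d̄, and let T > 0. Let θ, d : [0,T] → ℝ be differentiable functions such that for all t ∈ [0,T]: θ(t) ∈ [0, π], θ'(t) ≤ −γ·F̲, d'(t) ≤ β'·sin(θ(t)); suppose θ(0) = θ₀ ∈ (0, θ̄), d(0) = −(d̄/θ̄)·θ₀ + d̄, and θ(T) = 0. If β'/γ < (d̄·F̲)/θ̄, then d(T) < d̄. -/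
/-!
Since `θ` falls at rate at least `γ F̲`, it reaches `0` by time `θ₀ / (γ F̲)`; meanwhile `d`
rises at rate at most `β'`, so by less than `(β' / γ) θ₀ / F̲ < (d̄ / θ̄) θ₀`, which is exactly
the gap between `d 0` and `d̄`.
-/

open Set Real

lemma sub_le_mul_sub_of_hasDerivAt_le {f f' : ℝ → ℝ} {a b C : ℝ} (hab : a ≤ b)
    (hf : ∀ t ∈ Icc a b, HasDerivAt f (f' t) t) (hle : ∀ t ∈ Icc a b, f' t ≤ C) :
    f b - f a ≤ C * (b - a) :=
  (convex_Icc a b).image_sub_le_mul_sub_of_deriv_le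
    (fun t ht => (hf t ht).continuousAt.continuousWithinAt)
    (fun t ht => (hf t (interior_subset ht)).differentiableAt.differentiableWithinAt)
    (fun t ht => (hf t (interior_subset ht)).deriv ▸ hle t (interior_subset ht))
    a (left_mem_Icc.2 hab) b (right_mem_Icc.2 hab) hab

theorem stmt7_general (γ Flow β' θbar dbar T θ₀ : ℝ)
    (hγ : 0 < γ) (hFlow : 0 < Flow) (hβ' : 0 < β')
    (hT : 0 < T)
    (θ d θ' d' : ℝ → ℝ)
    (hθdiff : ∀ t ∈ Set.Icc (0 : ℝ) T, HasDerivAt θ (θ' t) t)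
    (hddiff : ∀ t ∈ Set.Icc (0 : ℝ) T, HasDerivAt d (d' t) t)
    (hθ' : ∀ t ∈ Set.Icc (0 : ℝ) T, θ' t ≤ -(γ * Flow))
    (hd' : ∀ t ∈ Set.Icc (0 : ℝ) T, d' t ≤ β' * Real.sin (θ t))
    (hθ0 : θ 0 = θ₀) (hθ₀mem : θ₀ ∈ Set.Ioo (0 : ℝ) θbar)
    (hd0 : d 0 = -(dbar / θbar) * θ₀ + dbar)
    (hθT : θ T = 0)
    (hparam : β' / γ < dbar * Flow / θbar) :
    d T < dbar := by
  obtain ⟨hθ₀pos, -⟩ := hθ₀mem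
  have hθdrop := sub_le_mul_sub_of_hasDerivAt_le hT.le hθdiff hθ'
  have hdrise := sub_le_mul_sub_of_hasDerivAt_le hT.le hddiff fun t ht =>
    (hd' t ht).trans (mul_le_of_le_one_right hβ'.le (sin_le_one _))
  have hT_le : T ≤ θ₀ / (γ * Flow) := by
    rw [le_div_iff₀ (by positivity)]
    linarith
  have hβT : β' * T < dbar / θbar * θ₀ :=
    calc β' * T ≤ β' * (θ₀ / (γ * Flow)) := by gcongr
      _ = β' / γ * θ₀ / Flow := by field_simp
      _ < dbar * Flow / θbar * θ₀ / Flow := by gcongr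
      _ = dbar / θbar * θ₀ := by field_simp
  linarith

/-- d-axis crossing below `(0, d̄)`.  Let `γ, F̲, β' > 0`,
`θ̄, d̄ > 0` and `T > 0`.  Let `θ, d` be differentiable on `[0,T]` with
`θ t ∈ [0, π]`, `θ' t ≤ −γ·F̲` and `d' t ≤ β'·sin (θ t)` on `[0,T]`, starting
on the line segment `d 0 = −(d̄/θ̄)·θ₀ + d̄` with `θ 0 = θ₀ ∈ (0, θ̄)`, and
reaching `θ T = 0`.  If `β'/γ < d̄·F̲/θ̄`, then `d T < d̄`. -/
theorem stmt7 (γ Flow β' θbar dbar T θ₀ : ℝ)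
    (hγ : 0 < γ) (hFlow : 0 < Flow) (hβ' : 0 < β')
    (hθbar : 0 < θbar) (hdbar : 0 < dbar) (hT : 0 < T)
    (θ d θ' d' : ℝ → ℝ)
    (hθdiff : ∀ t ∈ Set.Icc (0 : ℝ) T, HasDerivAt θ (θ' t) t)
    (hddiff : ∀ t ∈ Set.Icc (0 : ℝ) T, HasDerivAt d (d' t) t)
    (hθrange : ∀ t ∈ Set.Icc (0 : ℝ) T, θ t ∈ Set.Icc (0 : ℝ) Real.pi)
    (hθ' : ∀ t ∈ Set.Icc (0 : ℝ) T, θ' t ≤ -(γ * Flow))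
    (hd' : ∀ t ∈ Set.Icc (0 : ℝ) T, d' t ≤ β' * Real.sin (θ t))
    (hθ0 : θ 0 = θ₀) (hθ₀mem : θ₀ ∈ Set.Ioo (0 : ℝ) θbar)
    (hd0 : d 0 = -(dbar / θbar) * θ₀ + dbar)
    (hθT : θ T = 0)
    (hparam : β' / γ < dbar * Flow / θbar) :
    d T < dbar :=
  stmt7_general γ Flow β' θbar dbar T θ₀ hγ hFlow hβ' hT θ d θ' d' hθdiff hddiff hθ' hd' hθ0 hθ₀mem
    hd0 hθT hparam
end

section
/- Let θ̲, d̲ < 0 < θ̄, d̄ with θ̲, θ̄ ∈ (−π, π), and let X = (θ̲, θ̄) × (d̲, d̄) ⊆ ℝ × ℝ. Let F : ℝ × ℝ → ℝ be continuously differentiable on X with F(0,0) = 0 and with both partial derivatives (with respect to the first and the second argument) strictly negative at every point of X. Then for every ε > 0 there exist δ > 0, α ≥ 0 and β, γ > 0 such that: for any differentiable functions θ, d : [0,∞) → ℝ satisfying, for all t ≥ 0, (θ(t), d(t)) ∈ X, θ'(t) = γ·F(θ(t), d(t)) and d'(t) = β·exp(−α·F(θ(t),d(t))²)·sin(θ(t)),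 if max(|θ(0)|, |d(0)|) < δ then max(|θ(t)|, |d(t)|) < ε for all t ≥ 0. -/
/-!
With `α = 0` and `β = γ = 1` the function
`V (θ, d) = (1 - cos θ) + ∫₀^d -F (0, s) ds`
is a Lyapunov function: along solutions `V' = sin θ · (F (θ, d) - F (0, d)) ≤ 0`, because `F` is
decreasing in `θ` and `sin θ` has the sign of `θ` on `(-π, π)`. Both summands strictly decrease
to their minimum at `0` and strictly increase after it, so a sublevel set of `V` of small positive
height lies in a small box around the origin, and by continuity of `V` it contains a small box
around the origin.
-/

open Set Real Topology

def IsStrictValleyOn (φ : ℝ → ℝ) (I : Set ℝ) : Prop :=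
  StrictAntiOn φ (I ∩ Iic 0) ∧ StrictMonoOn φ (I ∩ Ici 0)

namespace IsStrictValleyOn

variable {φ : ℝ → ℝ} {I : Set ℝ}

theorem of_hasDerivAt {φ' : ℝ → ℝ} (hI : IsOpen I) (hIc : Convex ℝ I)
    (hφ : ∀ y ∈ I, HasDerivAt φ (φ' y) y) (hneg : ∀ y ∈ I, y < 0 → φ' y < 0)
    (hpos : ∀ y ∈ I, 0 < y → 0 < φ' y) : IsStrictValleyOn φ I := by
  have hcont : ContinuousOn φ I := HasDerivAt.continuousOn hφ
  constructor
  · refine strictAntiOn_of_hasDerivWithinAt_neg (f' := φ') (hIc.inter (convex_Iic 0))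
      (hcont.mono inter_subset_left) (fun y hy => ?_) fun y hy => ?_
    all_goals rw [interior_inter, hI.interior_eq, interior_Iic] at hy
    · exact (hφ y hy.1).hasDerivWithinAt
    · exact hneg y hy.1 hy.2
  · refine strictMonoOn_of_hasDerivWithinAt_pos (f' := φ') (hIc.inter (convex_Ici 0))
      (hcont.mono inter_subset_left) (fun y hy => ?_) fun y hy => ?_
    all_goals rw [interior_inter, hI.interior_eq, interior_Ici] at hy
    · exact (hφ y hy.1).hasDerivWithinAt
    · exact hpos y hy.1 hy.2

theorem apply_zero_le (h : IsStrictValleyOn φ I) (h0 : (0 : ℝ) ∈ I) {y : ℝ} (hy : y ∈ I) :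
    φ 0 ≤ φ y := by
  rcases le_total y 0 with hy0 | hy0
  · exact h.1.antitoneOn ⟨hy, hy0⟩ ⟨h0, self_mem_Iic⟩ hy0
  · exact h.2.monotoneOn ⟨h0, self_mem_Ici⟩ ⟨hy, hy0⟩ hy0

theorem apply_zero_lt_min (h : IsStrictValleyOn φ I) (h0 : (0 : ℝ) ∈ I) {r : ℝ} (hr : 0 < r)
    (hrI : r ∈ I) (hrI' : -r ∈ I) : φ 0 < min (φ (-r)) (φ r) :=
  lt_min (h.1 ⟨hrI', show -r ≤ 0 by linarith⟩ ⟨h0, self_mem_Iic⟩ (by linarith))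
    (h.2 ⟨h0, self_mem_Ici⟩ ⟨hrI, hr.le⟩ hr)

theorem abs_lt_of_lt_min (h : IsStrictValleyOn φ I) {r : ℝ} (hr : 0 < r) (hrI : r ∈ I)
    (hrI' : -r ∈ I) {y : ℝ} (hy : y ∈ I) (hφy : φ y < min (φ (-r)) (φ r)) : |y| < r := by
  by_contra! hry
  rcases le_abs'.mp hry with hyr | hry
  · have := h.1.antitoneOn ⟨hy, show y ≤ 0 by linarith⟩ ⟨hrI', show -r ≤ 0 by linarith⟩ hyr
    exact (min_le_left _ _).not_gt (this.trans_lt hφy)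
  · have := h.2.monotoneOn ⟨hrI, hr.le⟩ ⟨hy, show 0 ≤ y by linarith⟩ hry
    exact (min_le_right _ _).not_gt (this.trans_lt hφy)

end IsStrictValleyOn

theorem isStrictValleyOn_one_sub_cos : IsStrictValleyOn (fun x => 1 - cos x) (Ioo (-π) π) :=
  .of_hasDerivAt isOpen_Ioo (convex_Ioo _ _)
    (fun x _ => by simpa using (hasDerivAt_cos x).const_sub 1)
    (fun _ hx hx0 => sin_neg_of_neg_of_neg_pi_lt hx0 hx.1)
    (fun _ hx hx0 => sin_pos_of_pos_of_lt_pi hx0 hx.2)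

theorem hasDerivAt_integral_of_continuousOn_Ioo {g : ℝ → ℝ} {a b c y : ℝ}
    (hg : ContinuousOn g (Ioo a b)) (hc : c ∈ Ioo a b) (hy : y ∈ Ioo a b) :
    HasDerivAt (fun y => ∫ s in c..y, g s) (g y) y :=
  intervalIntegral.integral_hasDerivAt_right
    ((hg.mono (ordConnected_Ioo.uIcc_subset hc hy)).intervalIntegrable)
    (hg.stronglyMeasurableAtFilter isOpen_Ioo y hy) (hg.continuousAt (isOpen_Ioo.mem_nhds hy))

theorem isStrictValleyOn_integral_neg {g : ℝ → ℝ} {a b : ℝ} (hgc : ContinuousOn g (Ioo a b))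
    (hg : StrictAntiOn g (Ioo a b)) (h0 : (0 : ℝ) ∈ Ioo a b) (hg0 : g 0 = 0) :
    IsStrictValleyOn (fun y => ∫ s in (0 : ℝ)..y, -g s) (Ioo a b) :=
  .of_hasDerivAt isOpen_Ioo (convex_Ioo _ _)
    (fun _ hy => hasDerivAt_integral_of_continuousOn_Ioo hgc.neg h0 hy)
    (fun _ hy hy0 => neg_neg_of_pos (hg0 ▸ hg hy h0 hy0))
    (fun _ hy hy0 => neg_pos_of_neg (hg0 ▸ hg h0 hy hy0))

section PartialDeriv

variable {F : ℝ × ℝ → ℝ} {I J : Set ℝ}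

theorem strictAntiOn_fst_of_deriv_neg (hF : ContinuousOn F (I ×ˢ J)) (hI : Convex ℝ I)
    (hF' : ∀ p ∈ I ×ˢ J, deriv (fun x => F (x, p.2)) p.1 < 0) {y : ℝ} (hy : y ∈ J) :
    StrictAntiOn (fun x => F (x, y)) I :=
  strictAntiOn_of_deriv_neg hI (hF.comp (by fun_prop) fun _ hx => ⟨hx, hy⟩) fun x hx =>
    hF' (x, y) ⟨interior_subset hx, hy⟩

theorem strictAntiOn_snd_of_deriv_neg (hF : ContinuousOn F (I ×ˢ J)) (hJ : Convex ℝ J)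
    (hF' : ∀ p ∈ I ×ˢ J, deriv (fun y => F (p.1, y)) p.2 < 0) {x : ℝ} (hx : x ∈ I) :
    StrictAntiOn (fun y => F (x, y)) J :=
  strictAntiOn_of_deriv_neg hJ (hF.comp (by fun_prop) fun _ hy => ⟨hx, hy⟩) fun y hy =>
    hF' (x, y) ⟨hx, interior_subset hy⟩

end PartialDeriv

theorem sin_mul_sub_nonpos {f : ℝ → ℝ} {I : Set ℝ} (hI : I ⊆ Ioo (-π) π) (hf : AntitoneOn f I)
    (h0 : (0 : ℝ) ∈ I) {x : ℝ} (hx : x ∈ I) : sin x * (f x - f 0) ≤ 0 := by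
  rcases le_total x 0 with hx0 | hx0
  · exact mul_nonpos_of_nonpos_of_nonneg (sin_nonpos_of_nonpos_of_neg_pi_le hx0 (hI hx).1.le)
      (sub_nonneg.2 (hf hx h0 hx0))
  · exact mul_nonpos_of_nonneg_of_nonpos (sin_nonneg_of_nonneg_of_le_pi hx0 (hI hx).2.le)
      (sub_nonpos.2 (hf h0 hx hx0))

theorem antitoneOn_one_sub_cos_add {F : ℝ × ℝ → ℝ} {H : ℝ → ℝ} {θ d : ℝ → ℝ}
    (hH : ∀ t, 0 ≤ t → HasDerivAt H (-F (0, d t)) (d t))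
    (hθ : ∀ t, 0 ≤ t → HasDerivAt θ (F (θ t, d t)) t)
    (hd : ∀ t, 0 ≤ t → HasDerivAt d (sin (θ t)) t)
    (hsign : ∀ t, 0 ≤ t → sin (θ t) * (F (θ t, d t) - F (0, d t)) ≤ 0) :
    AntitoneOn (fun t => 1 - cos (θ t) + H (d t)) (Ici 0) := by
  have hV : ∀ t, 0 ≤ t → HasDerivAt (fun t => 1 - cos (θ t) + H (d t))
      (sin (θ t) * (F (θ t, d t) - F (0, d t))) t := fun t ht =>
    (((hθ t ht).cos.const_sub 1).add ((hH t ht).comp t (hd t ht))).congr_deriv (by ring)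
  refine antitoneOn_of_hasDerivWithinAt_nonpos
    (f' := fun t => sin (θ t) * (F (θ t, d t) - F (0, d t))) (convex_Ici 0)
    (fun t ht => (hV t ht).continuousAt.continuousWithinAt) (fun t ht => ?_) fun t ht => ?_
  all_goals rw [interior_Ici] at ht
  · exact (hV t (le_of_lt ht)).hasDerivWithinAt
  · exact hsign t (le_of_lt ht)

theorem exists_pos_forall_max_abs_lt {K H : ℝ → ℝ} {I J : Set ℝ}
    (hK : IsStrictValleyOn K I) (hH : IsStrictValleyOn H J) (hI : I ∈ 𝓝 0) (hJ : J ∈ 𝓝 0)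
    (hKc : ContinuousAt K 0) (hHc : ContinuousAt H 0) {ε : ℝ} (hε : 0 < ε) :
    ∃ δ > 0, ∀ x₀ y₀ x y, max |x₀| |y₀| < δ → x ∈ I → y ∈ J →
      K x + H y ≤ K x₀ + H y₀ → max |x| |y| < ε := by
  obtain ⟨ρ, hρ, hball⟩ := Metric.mem_nhds_iff.1 (Filter.inter_mem hI hJ)
  obtain ⟨r, hr, hrε, hrρ⟩ : ∃ r, 0 < r ∧ r < ε ∧ r < ρ :=
    ⟨min ε ρ / 2, by positivity, by linarith [min_le_left ε ρ], by linarith [min_le_right ε ρ]⟩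
  have hr_mem : r ∈ I ∩ J := hball (by simpa [abs_of_pos hr] using hrρ)
  have hr_mem' : -r ∈ I ∩ J := hball (by simpa [abs_of_pos hr] using hrρ)
  have hKr := hK.apply_zero_lt_min (mem_of_mem_nhds hI) hr hr_mem.1 hr_mem'.1
  have hHr := hH.apply_zero_lt_min (mem_of_mem_nhds hJ) hr hr_mem.2 hr_mem'.2
  set c := min (min (K (-r)) (K r) - K 0) (min (H (-r)) (H r) - H 0)
  have hc : 0 < c := lt_min (by linarith) (by linarith)
  have hV : ContinuousAt (fun p : ℝ × ℝ => K p.1 + H p.2) 0 :=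
    (hKc.comp_of_eq continuousAt_fst rfl).add (hHc.comp_of_eq continuousAt_snd rfl)
  obtain ⟨δ, hδ, hVδ⟩ := Metric.eventually_nhds_iff.1
    (hV.eventually (gt_mem_nhds (lt_add_of_pos_right _ hc)))
  refine ⟨δ, hδ, fun x₀ y₀ x y h₀ hx hy hxy => ?_⟩
  have hV₀ : K x₀ + H y₀ < K 0 + H 0 + c :=
    hVδ (y := (x₀, y₀)) (by
      rw [Prod.dist_eq]
      simpa only [Prod.fst_zero, Prod.snd_zero, Real.dist_0_eq_abs] using h₀)
  have hKx := hK.apply_zero_le (mem_of_mem_nhds hI) hx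
  have hHy := hH.apply_zero_le (mem_of_mem_nhds hJ) hy
  have hcK : c ≤ _ := min_le_left _ _
  have hcH : c ≤ _ := min_le_right _ _
  exact lt_of_lt_of_le (max_lt (hK.abs_lt_of_lt_min hr hr_mem.1 hr_mem'.1 hx (by linarith))
    (hH.abs_lt_of_lt_min hr hr_mem.2 hr_mem'.2 hy (by linarith))) hrε.le

/-- Lyapunov stability of the origin for the closed-loop
mobile-robot system.  Let `X = (θ̲, θ̄) × (d̲, d̄)` with
`θ̲, d̲ < 0 < θ̄, d̄` and `θ̲, θ̄ ∈ (−π, π)`.  Let `F` be continuously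
differentiable on `X`, vanish at the origin, and have strictly negative
partial derivatives in each argument at every point of `X`.  Then for every
`ε > 0` there exist `δ > 0`, `α ≥ 0` and `β, γ > 0` such that every solution
of the closed-loop dynamics staying in `X` that starts in the `∞`-ball of
radius `δ` about the origin remains in the `∞`-ball of radius `ε` for all
`t ≥ 0`. -/
theorem stmt12 (θlow θbar dlow dbar : ℝ)
    (hθlow : θlow < 0) (hθbar : 0 < θbar) (hdlow : dlow < 0) (hdbar : 0 < dbar)
    (hθlowπ : -Real.pi < θlow) (hθbarπ : θbar < Real.pi)
    (F : ℝ × ℝ → ℝ)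
    (X : Set (ℝ × ℝ)) (hX : X = Set.Ioo θlow θbar ×ˢ Set.Ioo dlow dbar)
    (hC1 : ContDiffOn ℝ 1 F X)
    (hF0 : F (0, 0) = 0)
    (hFθ : ∀ p ∈ X, deriv (fun x : ℝ => F (x, p.2)) p.1 < 0)
    (hFd : ∀ p ∈ X, deriv (fun y : ℝ => F (p.1, y)) p.2 < 0) :
    ∀ ε : ℝ, 0 < ε →
      ∃ δ : ℝ, 0 < δ ∧ ∃ α : ℝ, 0 ≤ α ∧ ∃ β γ : ℝ, 0 < β ∧ 0 < γ ∧
        ∀ θ d : ℝ → ℝ,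
          (∀ t : ℝ, 0 ≤ t → (θ t, d t) ∈ X) →
          (∀ t : ℝ, 0 ≤ t → HasDerivAt θ (γ * F (θ t, d t)) t) →
          (∀ t : ℝ, 0 ≤ t →
            HasDerivAt d
              (β * Real.exp (-α * F (θ t, d t) ^ 2) * Real.sin (θ t)) t) →
          max |θ 0| |d 0| < δ →
          ∀ t : ℝ, 0 ≤ t → max |θ t| |d t| < ε := by
  intro ε hε
  subst hX
  have h0θ : (0 : ℝ) ∈ Ioo θlow θbar := ⟨hθlow, hθbar⟩
  have h0d : (0 : ℝ) ∈ Ioo dlow dbar := ⟨hdlow, hdbar⟩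
  have hθπ : Ioo θlow θbar ⊆ Ioo (-π) π := Ioo_subset_Ioo hθlowπ.le hθbarπ.le
  have hFc := hC1.continuousOn
  have hg_cont : ContinuousOn (fun y => F (0, y)) (Ioo dlow dbar) :=
    hFc.comp (by fun_prop) fun y hy => ⟨h0θ, hy⟩
  have hg_anti := strictAntiOn_snd_of_deriv_neg hFc (convex_Ioo _ _) hFd h0θ
  have hF_anti : ∀ y ∈ Ioo dlow dbar, AntitoneOn (fun x => F (x, y)) (Ioo θlow θbar) :=
    fun y hy => (strictAntiOn_fst_of_deriv_neg hFc (convex_Ioo _ _) hFθ hy).antitoneOn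
  have hH : ∀ y ∈ Ioo dlow dbar,
      HasDerivAt (fun y => ∫ s in (0 : ℝ)..y, -F (0, s)) (-F (0, y)) y :=
    fun y hy => hasDerivAt_integral_of_continuousOn_Ioo hg_cont.neg h0d hy
  obtain ⟨δ, hδ, hstable⟩ := exists_pos_forall_max_abs_lt isStrictValleyOn_one_sub_cos
    (isStrictValleyOn_integral_neg hg_cont hg_anti h0d hF0)
    (Ioo_mem_nhds (neg_neg_of_pos pi_pos) pi_pos) (Ioo_mem_nhds hdlow hdbar)
    (by fun_prop) (hH 0 h0d).continuousAt hε
  refine ⟨δ, hδ, 0, le_rfl, 1, 1, one_pos, one_pos, fun θ d hX hθ hd h₀ t ht => ?_⟩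
  simp only [one_mul, neg_zero, zero_mul, exp_zero] at hθ hd
  exact hstable _ _ _ _ h₀ (hθπ (hX t ht).1) (hX t ht).2 <|
    antitoneOn_one_sub_cos_add (fun t ht => hH _ (hX t ht).2) hθ hd
      (fun t ht => sin_mul_sub_nonpos hθπ (hF_anti _ (hX t ht).2) h0θ (hX t ht).1)
      self_mem_Ici ht ht
end
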